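/- Let α be irrational with α*_ν + α_{ν+1} > 2 and α*_{ν+1} + α_{ν+2} > 2. Then the maximum of the product t·μ over all points (t,μ) on the line segment in ℝ² joining (q_ν, ξ_ν) and (q_{ν+1}, ξ_{ν+1}) equals F(α*_{ν+1}, α_{ν+2}⁻¹), where F(x,y) = (1-xy)²/(4(1+xy)(1-x)(1-y)). -/

import Mathlib

open Real Filter Set

/-- The function F from the paper. -/
noncomputable def Fm (x y : ℝ) : ℝ := (1 - x*y)^2 / (4*(1+x*y)*(1-x)*(1-y))

/-- The function G from the paper. -/
noncomputable def Gm (x y : ℝ) : ℝ := (x + y + 1)/4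

/-- Complete quotients of α : cq α 0 = α, cq α (n+1) = 1/{cq α n}. -/
noncomputable def cq (α : ℝ) : ℕ → ℝ
  | 0 => α
  | n+1 => (Int.fract (cq α n))⁻¹

/-- Partial quotients a_n of the continued fraction of α. -/
noncomputable def pquot (α : ℝ) (n : ℕ) : ℤ := ⌊cq α n⌋

/-- Denominators q_n of the convergents of α. -/
noncomputable def qd (α : ℝ) : ℕ → ℝ
  | 0 => 1
  | 1 => (pquot α 1 : ℝ)
  | n+2 => (pquot α (n+2) : ℝ) * qd α (n+1) + qd α n

/-- Numerators p_n of the convergents of α. -/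
noncomputable def pnum (α : ℝ) : ℕ → ℝ
  | 0 => (pquot α 0 : ℝ)
  | 1 => (pquot α 1 : ℝ) * (pquot α 0 : ℝ) + 1
  | n+2 => (pquot α (n+2) : ℝ) * pnum α (n+1) + pnum α n

/-- ξ_n = |q_n α - p_n|. -/
noncomputable def xi (α : ℝ) (n : ℕ) : ℝ := |qd α n * α - pnum α n|

/-- α*_n = [0; a_n, ..., a_1] = q_{n-1}/q_n. -/
noncomputable def astar (α : ℝ) (n : ℕ) : ℝ := qd α (n-1) / qd α n

/-- Distance from x to the nearest integer. -/
noncomputable def nidist (x : ℝ) : ℝ := |x - round x|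

/-- The ν-th convergent denominator satisfies the Legendre condition. -/
noncomputable def LegendreDen (α : ℝ) (ν : ℕ) : Prop :=
  |α - pnum α ν / qd α ν| < 1/(2 * (qd α ν)^2)

/-- ψ_α(t) = min_{1 ≤ x ≤ t} ‖xα‖. -/
noncomputable def psif (α : ℝ) (t : ℝ) : ℝ :=
  sInf {d : ℝ | ∃ x : ℤ, 1 ≤ x ∧ (x:ℝ) ≤ t ∧ d = nidist (x*α)}

/-! Along the segment the product `t μ` is a concave quadratic in the parameter, whose vertex lies
on the segment iff `2 q_ν ξ_ν ≤ 1` and `2 q_{ν+1} ξ_{ν+1} ≤ 1`. The identity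
`q_{ν+1} ξ_ν + q_ν ξ_{ν+1} = 1`, together with `ξ_ν = α_{ν+2} ξ_{ν+1}`, gives
`q_ν ξ_ν (α*_ν + α_{ν+1}) = 1`, so these two conditions are the hypotheses; it also turns the value
at the vertex into `F(q_ν / q_{ν+1}, ξ_{ν+1} / ξ_ν) = F(α*_{ν+1}, α_{ν+2}⁻¹)`. -/

lemma isGreatest_mul_image_segment {a b c d : ℝ} (hD : 0 < (b - a) * (c - d))
    (hac : 2 * a * c ≤ b * c + a * d) (hbd : 2 * b * d ≤ b * c + a * d) :
    IsGreatest ((fun p : ℝ × ℝ => p.1 * p.2) '' segment ℝ (a, c) (b, d))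
      ((b * c - a * d) ^ 2 / (4 * (b - a) * (c - d))) := by
  have hba : b - a ≠ 0 := left_ne_zero_of_mul hD.ne'
  have hcd : c - d ≠ 0 := right_ne_zero_of_mul hD.ne'
  set θ₀ := (b * c + a * d - 2 * a * c) / (2 * ((b - a) * (c - d)))
  have hprod : ∀ θ : ℝ,
      ((1 - θ) • ((a, c) : ℝ × ℝ) + θ • (b, d)).1 * ((1 - θ) • ((a, c) : ℝ × ℝ) + θ • (b, d)).2
        = (b * c - a * d) ^ 2 / (4 * (b - a) * (c - d)) - (b - a) * (c - d) * (θ - θ₀) ^ 2 := by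
    intro θ
    simp only [Prod.fst_add, Prod.snd_add, Prod.smul_fst, Prod.smul_snd, smul_eq_mul, θ₀]
    field_simp
    ring
  rw [segment_eq_image, ← Set.image_comp]
  refine ⟨⟨θ₀, ⟨?_, ?_⟩, ?_⟩, ?_⟩
  · exact div_nonneg (by linarith) (by linarith)
  · rw [div_le_one (by linarith)]
    linarith
  · simp only [Function.comp_apply, hprod, sub_self]
    ring
  · rintro _ ⟨θ, -, rfl⟩
    simp only [Function.comp_apply, hprod]
    nlinarith [sq_nonneg (θ - θ₀)]

lemma Fm_div_div {a b c d : ℝ} (hb : b ≠ 0) (hc : c ≠ 0) :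
    Fm (a / b) (d / c) = (b * c - a * d) ^ 2 / (4 * (b * c + a * d) * (b - a) * (c - d)) := by
  rw [Fm]
  field_simp

section ContinuedFraction

variable {α : ℝ}

lemma irrational_cq (hα : Irrational α) : ∀ n, Irrational (cq α n)
  | 0 => hα
  | n + 1 => by
    rw [cq, ← Int.self_sub_floor]
    exact ((irrational_cq hα n).sub_intCast _).inv

lemma cq_succ_mul_sub_pquot (hα : Irrational α) (n : ℕ) :
    cq α (n + 1) * (cq α n - pquot α n) = 1 := by
  rw [cq, pquot, Int.self_sub_floor]
  exact inv_mul_cancel₀ (Int.fract_pos.2 ((irrational_cq hα n).ne_int _)).ne'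

lemma one_lt_cq_succ (hα : Irrational α) (n : ℕ) : 1 < cq α (n + 1) := by
  have hfract := Int.fract_pos.2 ((irrational_cq hα n).ne_int ⌊cq α n⌋)
  exact (one_lt_inv₀ hfract).2 (Int.fract_lt_one _)

lemma one_le_pquot_succ (hα : Irrational α) (n : ℕ) : (1 : ℝ) ≤ pquot α (n + 1) := by
  have h : (1 : ℤ) ≤ pquot α (n + 1) := Int.le_floor.2 (by exact_mod_cast (one_lt_cq_succ hα n).le)
  exact_mod_cast h

lemma one_le_qd (hα : Irrational α) : ∀ n, 1 ≤ qd α n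
  | 0 => le_rfl
  | 1 => one_le_pquot_succ hα 0
  | n + 2 => by
    have := one_le_qd hα n
    have := one_le_qd hα (n + 1)
    have := one_le_pquot_succ hα (n + 1)
    rw [qd]
    nlinarith

lemma qd_succ_lt_qd_add_two (hα : Irrational α) (n : ℕ) : qd α (n + 1) < qd α (n + 2) := by
  have := one_le_qd hα n
  have := one_le_qd hα (n + 1)
  have := one_le_pquot_succ hα (n + 1)
  rw [qd]
  nlinarith

lemma abs_qd_mul_pnum_sub (n : ℕ) : |qd α (n + 1) * pnum α n - qd α n * pnum α (n + 1)| = 1 := by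
  induction n with
  | zero => simp [qd, pnum]
  | succ n ih =>
    rw [← ih, ← abs_neg, qd, pnum]
    ring_nf

noncomputable def dev (α : ℝ) (n : ℕ) : ℝ := qd α n * α - pnum α n

lemma dev_eq_neg_cq_mul_dev_succ (hα : Irrational α) :
    ∀ n, dev α n = -cq α (n + 2) * dev α (n + 1)
  | 0 => by
    have h₀ : cq α 1 * (α - pquot α 0) = 1 := cq_succ_mul_sub_pquot hα 0
    have h₁ : cq α 2 * (cq α 1 - pquot α 1) = 1 := cq_succ_mul_sub_pquot hα 1
    change qd α 0 * α - pnum α 0 = -cq α 2 * (qd α 1 * α - pnum α 1)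
    simp only [qd, pnum]
    linear_combination (-(α - pquot α 0)) * h₁ + cq α 2 * h₀
  | n + 1 => by
    have ih := dev_eq_neg_cq_mul_dev_succ hα n
    have h := cq_succ_mul_sub_pquot hα (n + 2)
    have hrec : dev α (n + 2) = pquot α (n + 2) * dev α (n + 1) + dev α n := by
      simp only [dev, qd, pnum]
      ring
    rw [hrec, ih]
    linear_combination -(dev α (n + 1)) * h

lemma xi_eq_cq_mul_xi_succ (hα : Irrational α) (n : ℕ) : xi α n = cq α (n + 2) * xi α (n + 1) := by
  have hcq : 0 < cq α (n + 2) := zero_lt_one.trans (one_lt_cq_succ hα (n + 1))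
  change |dev α n| = _ * |dev α (n + 1)|
  rw [dev_eq_neg_cq_mul_dev_succ hα n, abs_mul, abs_neg, abs_of_pos hcq]

lemma qd_add_qd_mul_cq_mul_xi_succ (hα : Irrational α) (n : ℕ) :
    (qd α n + qd α (n + 1) * cq α (n + 2)) * xi α (n + 1) = 1 := by
  have hpos : 0 < qd α n + qd α (n + 1) * cq α (n + 2) := by
    have := one_le_qd hα n
    have := one_le_qd hα (n + 1)
    have := one_lt_cq_succ hα (n + 1)
    positivity
  have hdet : qd α (n + 1) * pnum α n - qd α n * pnum α (n + 1)
      = (qd α n + qd α (n + 1) * cq α (n + 2)) * dev α (n + 1) := by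
    rw [show qd α (n + 1) * pnum α n - qd α n * pnum α (n + 1)
        = qd α n * dev α (n + 1) - qd α (n + 1) * dev α n by simp only [dev]; ring,
      dev_eq_neg_cq_mul_dev_succ hα n]
    ring
  rw [← abs_of_pos hpos, xi, ← abs_mul, ← dev, ← hdet, abs_qd_mul_pnum_sub]

lemma xi_succ_pos (hα : Irrational α) (n : ℕ) : 0 < xi α (n + 1) := by
  have h := qd_add_qd_mul_cq_mul_xi_succ hα n
  have hne : xi α (n + 1) ≠ 0 := by
    rintro h0
    rw [h0, mul_zero] at h
    exact zero_ne_one h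
  exact (abs_nonneg _).lt_of_ne' hne

lemma xi_succ_lt_xi (hα : Irrational α) (n : ℕ) : xi α (n + 1) < xi α n := by
  rw [xi_eq_cq_mul_xi_succ hα n]
  exact lt_mul_of_one_lt_left (xi_succ_pos hα n) (one_lt_cq_succ hα (n + 1))

lemma qd_succ_mul_xi_add_qd_mul_xi_succ (hα : Irrational α) (n : ℕ) :
    qd α (n + 1) * xi α n + qd α n * xi α (n + 1) = 1 := by
  rw [xi_eq_cq_mul_xi_succ hα n, ← qd_add_qd_mul_cq_mul_xi_succ hα n]
  ring

lemma two_mul_qd_mul_xi_lt_one (hα : Irrational α) {n : ℕ}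
    (h : 2 < astar α (n + 1) + cq α (n + 2)) : 2 * (qd α (n + 1) * xi α (n + 1)) < 1 := by
  have hq : qd α (n + 1) ≠ 0 := (zero_lt_one.trans_le (one_le_qd hα (n + 1))).ne'
  have hid : qd α (n + 1) * xi α (n + 1) * (astar α (n + 1) + cq α (n + 2)) = 1 := by
    rw [astar, Nat.add_sub_cancel, ← qd_add_qd_mul_cq_mul_xi_succ hα n]
    field_simp
  nlinarith [xi_succ_pos hα n, one_le_qd hα (n + 1)]

lemma inv_cq_eq_xi_div (hα : Irrational α) (n : ℕ) : (cq α (n + 2))⁻¹ = xi α (n + 1) / xi α n := by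
  rw [xi_eq_cq_mul_xi_succ hα n, div_mul_cancel_right₀ (xi_succ_pos hα n).ne']

end ContinuedFraction

theorem stmt11 (α : ℝ) (hα : Irrational α) (ν : ℕ) (hν : 1 ≤ ν)
    (h1 : astar α ν + cq α (ν+1) > 2) (h2 : astar α (ν+1) + cq α (ν+2) > 2) :
    IsGreatest ((fun p : ℝ × ℝ => p.1 * p.2) ''
        segment ℝ ((qd α ν, xi α ν) : ℝ × ℝ) (qd α (ν+1), xi α (ν+1)))
      (Fm (astar α (ν+1)) (cq α (ν+2))⁻¹) := by
  obtain ⟨m, rfl⟩ : ∃ m, ν = m + 1 := ⟨ν - 1, by omega⟩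
  have hsum := qd_succ_mul_xi_add_qd_mul_xi_succ hα (m + 1)
  have hFm : Fm (astar α (m + 1 + 1)) (cq α (m + 1 + 2))⁻¹ = (qd α (m + 1 + 1) * xi α (m + 1)
      - qd α (m + 1) * xi α (m + 1 + 1)) ^ 2
      / (4 * (qd α (m + 1 + 1) - qd α (m + 1)) * (xi α (m + 1) - xi α (m + 1 + 1))) := by
    rw [astar, Nat.add_sub_cancel, inv_cq_eq_xi_div hα, Fm_div_div, hsum, mul_one]
    · exact (zero_lt_one.trans_le (one_le_qd hα _)).ne'
    · exact (xi_succ_pos hα m).ne'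
  rw [hFm]
  apply isGreatest_mul_image_segment
  · exact mul_pos (sub_pos.2 (qd_succ_lt_qd_add_two hα m)) (sub_pos.2 (xi_succ_lt_xi hα (m + 1)))
  · linarith [two_mul_qd_mul_xi_lt_one hα h1]
  · linarith [two_mul_qd_mul_xi_lt_one hα h2]
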